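/- arXiv:1004.4492 — 2 statements merged into one kernel-verified Lean document; each statement's English description precedes it below -/
import Mathlib

section
/- (Weyl's inequality) For Hermitian matrices A, B ∈ ℂ^{N×N} with eigenvalues in nondecreasing order, μ_{i+j−N}(A+B) ≤ μ_i(A) + μ_j(B) whenever i + j ≥ N + 1, and μ_{i+j−1}(A+B) ≥ μ_i(A) + μ_j(B) whenever i + j ≤ N + 1. -/
/-!
The eigenvectors of `A` for its `i` smallest eigenvalues, those of `B` for its `j` smallest and
those of `A + B` for its `N - k + 1` largest span subspaces whose dimensions add up to more than
`2N`, so the three subspaces share a nonzero vector `x`. Evaluating the quadratic forms at `x`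
gives `μ_k(A + B) ‖x‖² ≤ ⟪x, (A + B) x⟫ = ⟪x, A x⟫ + ⟪x, B x⟫ ≤ (μ_i(A) + μ_j(B)) ‖x‖²`.
The reverse inequality is the same statement for `-A` and `-B`.
-/

open Finset Matrix Module
open scoped InnerProductSpace

namespace Monotone

variable {α β γ : Type*} [Preorder α] [Preorder γ] [DecidableEq β] {f : β → γ} {g : α → β}
  {i : α} {t : β}

theorem apply_le_of_mem_image_Iic [LocallyFiniteOrderBot α] (h : Monotone (f ∘ g))
    (ht : t ∈ (Iic i).image g) : f t ≤ f (g i) := by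
  obtain ⟨s, hs, rfl⟩ := mem_image.mp ht
  exact h (mem_Iic.mp hs)

theorem le_apply_of_mem_image_Ici [LocallyFiniteOrderTop α] (h : Monotone (f ∘ g))
    (ht : t ∈ (Ici i).image g) : f (g i) ≤ f t := by
  obtain ⟨s, hs, rfl⟩ := mem_image.mp ht
  exact h (mem_Ici.mp hs)

end Monotone

namespace Submodule

variable {K M : Type*} [DivisionRing K] [AddCommGroup M] [Module K M] [FiniteDimensional K M]

theorem inf_inf_ne_bot_of_two_mul_finrank_lt {U V W : Submodule K M}
    (h : 2 * finrank K M < finrank K U + finrank K V + finrank K W) : U ⊓ V ⊓ W ≠ ⊥ := by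
  intro hbot
  have hUV := finrank_sup_add_finrank_inf_eq U V
  have hUVW := finrank_sup_add_finrank_inf_eq (U ⊓ V) W
  have := finrank_le (U ⊔ V)
  have := finrank_le (U ⊓ V ⊔ W)
  rw [hbot, finrank_bot] at hUVW
  omega

end Submodule

namespace OrthonormalBasis

variable {𝕜 E ι : Type*} [RCLike 𝕜] [NormedAddCommGroup E] [InnerProductSpace 𝕜 E] [Fintype ι]
  (b : OrthonormalBasis ι 𝕜 E)

theorem finrank_span_image (S : Finset ι) : finrank 𝕜 (Submodule.span 𝕜 (b '' S)) = #S := by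
  have : LinearIndependent 𝕜 fun s : (S : Set ι) => b s :=
    b.orthonormal.linearIndependent.comp _ Subtype.val_injective
  rw [Set.image_eq_range, finrank_span_eq_card this]
  simp

theorem inner_eq_zero_of_mem_span_image {S : Set ι} {x : E} (hx : x ∈ Submodule.span 𝕜 (b '' S))
    {i : ι} (hi : i ∉ S) : ⟪b i, x⟫_𝕜 = 0 := by
  rw [← b.coe_toBasis, b.toBasis.mem_span_image] at hx
  rw [← b.repr_apply_apply, ← b.coe_toBasis_repr_apply]
  exact Finsupp.notMem_support_iff.mp fun h => hi (hx h)

variable {b} {T : E →ₗ[𝕜] E} {d : ι → ℝ}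

theorem re_inner_apply_eq_sum (hT : ∀ i, T (b i) = (d i : 𝕜) • b i) (x : E) :
    RCLike.re ⟪x, T x⟫_𝕜 = ∑ i, d i * ‖⟪b i, x⟫_𝕜‖ ^ 2 := by
  have hTx : T x = ∑ i, ((d i : 𝕜) * ⟪b i, x⟫_𝕜) • b i := by
    conv_lhs => rw [← b.sum_repr' x]
    simp only [map_sum, map_smul, hT, smul_smul, mul_comm]
  rw [hTx, inner_sum, map_sum]
  refine sum_congr rfl fun i _ => ?_
  rw [inner_smul_right, ← inner_conj_symm x (b i), mul_assoc, RCLike.mul_conj, ← RCLike.ofReal_pow,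
    ← RCLike.ofReal_mul, RCLike.ofReal_re]

theorem re_inner_apply_le_of_mem_span (hT : ∀ i, T (b i) = (d i : 𝕜) • b i) {S : Set ι} {μ : ℝ}
    (hd : ∀ i ∈ S, d i ≤ μ) {x : E} (hx : x ∈ Submodule.span 𝕜 (b '' S)) :
    RCLike.re ⟪x, T x⟫_𝕜 ≤ μ * ‖x‖ ^ 2 := by
  rw [re_inner_apply_eq_sum hT, ← b.sum_sq_norm_inner_right, mul_sum]
  refine sum_le_sum fun i _ => ?_
  by_cases hi : i ∈ S
  · exact mul_le_mul_of_nonneg_right (hd i hi) (sq_nonneg _)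
  · simp [b.inner_eq_zero_of_mem_span_image hx hi]

theorem le_re_inner_apply_of_mem_span (hT : ∀ i, T (b i) = (d i : 𝕜) • b i) {S : Set ι} {μ : ℝ}
    (hd : ∀ i ∈ S, μ ≤ d i) {x : E} (hx : x ∈ Submodule.span 𝕜 (b '' S)) :
    μ * ‖x‖ ^ 2 ≤ RCLike.re ⟪x, T x⟫_𝕜 := by
  rw [re_inner_apply_eq_sum hT, ← b.sum_sq_norm_inner_right, mul_sum]
  refine sum_le_sum fun i _ => ?_
  by_cases hi : i ∈ S
  · exact mul_le_mul_of_nonneg_right (hd i hi) (sq_nonneg _)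
  · simp [b.inner_eq_zero_of_mem_span_image hx hi]

end OrthonormalBasis

namespace LinearMap

variable {𝕜 E ι : Type*} [RCLike 𝕜] [NormedAddCommGroup E] [InnerProductSpace 𝕜 E] [Fintype ι]
  {bT bU bTU : OrthonormalBasis ι 𝕜 E} {T U : E →ₗ[𝕜] E} {dT dU dTU : ι → ℝ}
  {ST SU STU : Finset ι} {a b c : ℝ}

theorem le_add_of_two_mul_card_lt (hT : ∀ i, T (bT i) = (dT i : 𝕜) • bT i)
    (hU : ∀ i, U (bU i) = (dU i : 𝕜) • bU i) (hTU : ∀ i, (T + U) (bTU i) = (dTU i : 𝕜) • bTU i)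
    (hcard : 2 * Fintype.card ι < #ST + #SU + #STU)
    (ha : ∀ i ∈ ST, dT i ≤ a) (hb : ∀ i ∈ SU, dU i ≤ b) (hc : ∀ i ∈ STU, c ≤ dTU i) :
    c ≤ a + b := by
  have := bT.toBasis.finiteDimensional_of_finite
  obtain ⟨x, ⟨⟨hxT, hxU⟩, hxTU⟩, hx0⟩ := Submodule.exists_mem_ne_zero_of_ne_bot <|
    Submodule.inf_inf_ne_bot_of_two_mul_finrank_lt (U := Submodule.span 𝕜 (bT '' ST))
      (V := Submodule.span 𝕜 (bU '' SU)) (W := Submodule.span 𝕜 (bTU '' STU)) <| by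
    rwa [bT.finrank_span_image, bU.finrank_span_image, bTU.finrank_span_image,
      finrank_eq_card_basis bT.toBasis]
  have hxT := bT.re_inner_apply_le_of_mem_span hT ha hxT
  have hxU := bU.re_inner_apply_le_of_mem_span hU hb hxU
  have hxTU := bTU.le_re_inner_apply_of_mem_span hTU hc hxTU
  rw [add_apply, inner_add_right, map_add] at hxTU
  have hx : 0 < ‖x‖ ^ 2 := by positivity
  exact le_of_mul_le_mul_right (by linarith) hx

theorem add_le_of_two_mul_card_lt (hT : ∀ i, T (bT i) = (dT i : 𝕜) • bT i)
    (hU : ∀ i, U (bU i) = (dU i : 𝕜) • bU i) (hTU : ∀ i, (T + U) (bTU i) = (dTU i : 𝕜) • bTU i)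
    (hcard : 2 * Fintype.card ι < #ST + #SU + #STU)
    (ha : ∀ i ∈ ST, a ≤ dT i) (hb : ∀ i ∈ SU, b ≤ dU i) (hc : ∀ i ∈ STU, dTU i ≤ c) :
    a + b ≤ c := by
  have := le_add_of_two_mul_card_lt (bT := bT) (bU := bU) (bTU := bTU)
    (T := -T) (U := -U) (dT := -dT) (dU := -dU) (dTU := -dTU) (a := -a) (b := -b) (c := -c)
    (by simp [hT]) (by simp [hU]) (fun i => by rw [← neg_add, neg_apply, hTU]; simp) hcard
    (by simpa using ha) (by simpa using hb) (by simpa using hc)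
  linarith

end LinearMap

namespace Matrix.IsHermitian

variable {𝕜 n : Type*} [RCLike 𝕜] [Fintype n] [DecidableEq n] {A : Matrix n n 𝕜}

theorem toEuclideanLin_eigenvectorBasis (hA : A.IsHermitian) (i : n) :
    toEuclideanLin A (hA.eigenvectorBasis i) =
      (hA.eigenvalues i : 𝕜) • hA.eigenvectorBasis i := by
  apply WithLp.ofLp_injective
  rw [ofLp_toLpLin, WithLp.ofLp_smul, toLin'_apply, hA.mulVec_eigenvectorBasis,
    RCLike.real_smul_eq_coe_smul (K := 𝕜)]

end Matrix.IsHermitian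

/-- Weyl's inequalities for eigenvalues (in nondecreasing order, 1-based indices) of sums of
Hermitian matrices: μ_{i+j−N}(A+B) ≤ μ_i(A) + μ_j(B) and μ_{i+j−1}(A+B) ≥ μ_i(A) + μ_j(B). -/
theorem stmt_8 (N : ℕ) (A B : Matrix (Fin N) (Fin N) ℂ)
    (hA : A.IsHermitian) (hB : B.IsHermitian) (hAB : (A + B).IsHermitian)
    (p q r : Equiv.Perm (Fin N))
    (hp : Monotone (hA.eigenvalues ∘ p)) (hq : Monotone (hB.eigenvalues ∘ q))
    (hr : Monotone (hAB.eigenvalues ∘ r)) :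
    (∀ i j k : Fin N, (i : ℕ) + 1 + ((j : ℕ) + 1) = N + ((k : ℕ) + 1) →
      hAB.eigenvalues (r k) ≤ hA.eigenvalues (p i) + hB.eigenvalues (q j)) ∧
    (∀ i j k : Fin N, (i : ℕ) + 1 + ((j : ℕ) + 1) = (k : ℕ) + 1 + 1 →
      hA.eigenvalues (p i) + hB.eigenvalues (q j) ≤ hAB.eigenvalues (r k)) := by
  have hsum : ∀ k, (toEuclideanLin A + toEuclideanLin B) (hAB.eigenvectorBasis k) =
      (hAB.eigenvalues k : ℂ) • hAB.eigenvectorBasis k := by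
    rw [← map_add]
    exact hAB.toEuclideanLin_eigenvectorBasis
  constructor
  · intro i j k hijk
    refine LinearMap.le_add_of_two_mul_card_lt hA.toEuclideanLin_eigenvectorBasis
      hB.toEuclideanLin_eigenvectorBasis hsum (ST := (Iic i).image p) (SU := (Iic j).image q)
      (STU := (Ici k).image r) ?_ (fun _ => hp.apply_le_of_mem_image_Iic)
      (fun _ => hq.apply_le_of_mem_image_Iic) (fun _ => hr.le_apply_of_mem_image_Ici)
    rw [card_image_of_injective _ p.injective, card_image_of_injective _ q.injective,
      card_image_of_injective _ r.injective, Fin.card_Iic, Fin.card_Iic, Fin.card_Ici,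
      Fintype.card_fin]
    omega
  · intro i j k hijk
    refine LinearMap.add_le_of_two_mul_card_lt hA.toEuclideanLin_eigenvectorBasis
      hB.toEuclideanLin_eigenvectorBasis hsum (ST := (Ici i).image p) (SU := (Ici j).image q)
      (STU := (Iic k).image r) ?_ (fun _ => hp.le_apply_of_mem_image_Ici)
      (fun _ => hq.le_apply_of_mem_image_Ici) (fun _ => hr.apply_le_of_mem_image_Iic)
    rw [card_image_of_injective _ p.injective, card_image_of_injective _ q.injective,
      card_image_of_injective _ r.injective, Fin.card_Ici, Fin.card_Ici, Fin.card_Iic,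
      Fintype.card_fin]
    omega
end

section
/- Suppose h₁,...,h_K ∈ ℂ^N are linearly independent with K ≤ N, and P ⪰ 0 with tr(P) < 1. Fix ℓ and let Z = [h₁,...,h_{ℓ−1},h_{ℓ+1},...,h_K]. Then Π_Z^⊥ h_ℓ ≠ 0, and the matrix Q = P + (1 − tr(P)) · (Π_Z^⊥ h_ℓ h_ℓᴴ Π_Z^⊥)/tr(Π_Z^⊥ h_ℓ h_ℓᴴ Π_Z^⊥) satisfies: Q ⪰ 0, tr(Q) = 1, h_kᴴ Q h_k = h_kᴴ P h_k for all k ≠ ℓ, and h_ℓᴴ Q h_ℓ > h_ℓᴴ P h_ℓ. -/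
/-!
Write `v = Π h_ℓ`. If `v = 0`, then `h_ℓ` is orthogonal to every vector orthogonal to the other
channels, so it lies in their span, contradicting linear independence. Adding a multiple of
`v vᴴ` leaves `h_kᴴ Q h_k` unchanged for `k ≠ ℓ`, since `h_kᴴ v = 0`, and raises `h_ℓᴴ Q h_ℓ`,
since `h_ℓᴴ v = vᴴ v > 0`; the multiple is chosen so that the trace becomes exactly 1.
-/

open Matrix ComplexOrder

namespace Matrix

variable {n : Type*} [Fintype n]

theorem IsHermitian.star_dotProduct_mulVec_comm {α : Type*} [CommSemiring α] [StarRing α]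
    {A : Matrix n n α} (hA : A.IsHermitian) (x y : n → α) :
    star y ⬝ᵥ (A *ᵥ x) = star (A *ᵥ y) ⬝ᵥ x := by
  rw [dotProduct_mulVec, star_mulVec, hA.eq]

theorem mem_span_of_forall_star_dotProduct_eq_zero {𝕜 : Type*} [RCLike 𝕜] {S : Set (n → 𝕜)}
    {y : n → 𝕜} (hy : ∀ x, (∀ w ∈ S, star w ⬝ᵥ x = 0) → star y ⬝ᵥ x = 0) :
    y ∈ Submodule.span 𝕜 S := by
  let e := (WithLp.linearEquiv 2 𝕜 (n → 𝕜)).symm.toLinearMap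
  rw [← Submodule.apply_mem_span_image_iff_mem_span (f := e) (WithLp.toLp_injective 2),
    ← Submodule.orthogonal_orthogonal (Submodule.span 𝕜 (e '' S)), Submodule.mem_orthogonal']
  intro x hx
  have hSx : ∀ w ∈ S, star w ⬝ᵥ x.ofLp = 0 := fun w hw => by
    simpa [e, EuclideanSpace.inner_eq_star_dotProduct, dotProduct_comm] using
      Submodule.inner_right_of_mem_orthogonal
        (Submodule.subset_span (Set.mem_image_of_mem e hw)) hx
  simpa [e, EuclideanSpace.inner_eq_star_dotProduct, dotProduct_comm] using hy x.ofLp hSx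

theorem IsHermitian.mulVec_ne_zero_of_linearIndependent {𝕜 ι : Type*} [RCLike 𝕜]
    {h : ι → n → 𝕜} (hli : LinearIndependent 𝕜 h) {ℓ : ι} {Pr : Matrix n n 𝕜}
    (hPr : Pr.IsHermitian) (hfix : ∀ x, (∀ j, j ≠ ℓ → star (h j) ⬝ᵥ x = 0) → Pr *ᵥ x = x) :
    Pr *ᵥ h ℓ ≠ 0 := by
  intro h0
  refine hli.notMem_span_image (s := {ℓ}ᶜ) (Set.notMem_compl_iff.mpr rfl)
    (mem_span_of_forall_star_dotProduct_eq_zero fun x hx => ?_)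
  have hx' : ∀ j, j ≠ ℓ → star (h j) ⬝ᵥ x = 0 := fun j hj => hx _ ⟨j, hj, rfl⟩
  rw [← hfix x hx', hPr.star_dotProduct_mulVec_comm, h0, star_zero, zero_dotProduct]

theorem star_dotProduct_vecMulVec_mulVec {α : Type*} [CommSemiring α] [StarRing α] (v x : n → α) :
    star x ⬝ᵥ (vecMulVec v (star v) *ᵥ x) = (star x ⬝ᵥ v) * (star v ⬝ᵥ x) := by
  rw [vecMulVec_mulVec, op_smul_eq_smul, dotProduct_smul, smul_eq_mul, mul_comm]

theorem star_dotProduct_self_eq_sum_norm_sq (v : n → ℂ) :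
    star v ⬝ᵥ v = ((∑ i, ‖v i‖ ^ 2 : ℝ) : ℂ) := by
  push_cast
  exact Finset.sum_congr rfl fun i _ => Complex.conj_mul' (v i)

theorem PosSemidef.trace_eq_ofReal_re {P : Matrix n n ℂ} (hP : P.PosSemidef) :
    P.trace = (P.trace.re : ℂ) :=
  Complex.ext rfl (Complex.nonneg_iff.mp hP.trace_nonneg).2.symm

end Matrix

theorem stmt_11_general (N K : ℕ) (h : Fin K → (Fin N → ℂ))
    (hli : LinearIndependent ℂ h) (ℓ : Fin K)
    (P : Matrix (Fin N) (Fin N) ℂ) (hP : P.PosSemidef) (htr : P.trace.re < 1)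
    (Pr : Matrix (Fin N) (Fin N) ℂ) (hPrH : Pr.IsHermitian) (hPrIdem : Pr * Pr = Pr)
    (hPrRange : ∀ x : Fin N → ℂ, (∀ j, j ≠ ℓ → star (h j) ⬝ᵥ x = 0) ↔ Pr *ᵥ x = x)
    (Q : Matrix (Fin N) (Fin N) ℂ)
    (hQdef : Q = P + ((1 - P.trace.re) * (∑ i, ‖(Pr *ᵥ h ℓ) i‖ ^ 2)⁻¹) •
        vecMulVec (Pr *ᵥ h ℓ) (star (Pr *ᵥ h ℓ))) :
    Pr *ᵥ h ℓ ≠ 0 ∧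
    Q.PosSemidef ∧
    Q.trace = 1 ∧
    (∀ k, k ≠ ℓ → (star (h k) ⬝ᵥ Q *ᵥ h k).re = (star (h k) ⬝ᵥ P *ᵥ h k).re) ∧
    (star (h ℓ) ⬝ᵥ P *ᵥ h ℓ).re < (star (h ℓ) ⬝ᵥ Q *ᵥ h ℓ).re := by
  set v := Pr *ᵥ h ℓ with hv_def
  set S : ℝ := ∑ i, ‖v i‖ ^ 2
  set c : ℝ := (1 - P.trace.re) * S⁻¹
  have hv : v ≠ 0 := hPrH.mulVec_ne_zero_of_linearIndependent hli fun x => (hPrRange x).mp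
  have hvv : star v ⬝ᵥ v = S := star_dotProduct_self_eq_sum_norm_sq v
  have hS : 0 < S := by
    have := dotProduct_star_self_pos_iff.mpr hv
    rw [hvv] at this
    exact_mod_cast this
  have hc : 0 < c := mul_pos (by linarith) (inv_pos.mpr hS)
  have hPv : Pr *ᵥ v = v := by rw [hv_def, mulVec_mulVec, hPrIdem]
  have hquad : ∀ x, star x ⬝ᵥ (Q *ᵥ x)
      = star x ⬝ᵥ (P *ᵥ x) + c • ((star x ⬝ᵥ v) * (star v ⬝ᵥ x)) := fun x => by
    rw [hQdef, add_mulVec, dotProduct_add, smul_mulVec, dotProduct_smul,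
      star_dotProduct_vecMulVec_mulVec]
  refine ⟨hv, hQdef ▸ hP.add ((posSemidef_vecMulVec_self_star v).smul hc.le), ?_,
    fun k hk => ?_, ?_⟩
  · have hcS : c * S = 1 - P.trace.re := inv_mul_cancel_right₀ hS.ne' _
    rw [hQdef, trace_add, trace_smul, trace_vecMulVec, dotProduct_comm, hvv,
      hP.trace_eq_ofReal_re, Complex.real_smul, ← Complex.ofReal_mul, hcS]
    push_cast
    ring
  · rw [hquad, (hPrRange v).mpr hPv k hk, zero_mul, smul_zero, add_zero]
  · have hℓv : star (h ℓ) ⬝ᵥ v = S :=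
      calc star (h ℓ) ⬝ᵥ v = star (h ℓ) ⬝ᵥ (Pr *ᵥ v) := by rw [hPv]
        _ = star v ⬝ᵥ v := hPrH.star_dotProduct_mulVec_comm v (h ℓ)
        _ = S := hvv
    have hvℓ : star v ⬝ᵥ h ℓ = S := by
      rw [star_dotProduct, hℓv, Complex.star_def, Complex.conj_ofReal]
    rw [hquad, hℓv, hvℓ, Complex.add_re, Complex.real_smul, ← Complex.ofReal_mul,
      ← Complex.ofReal_mul, Complex.ofReal_re]
    have : 0 < c * (S * S) := by positivity
    linarith

/-- Any covariance matrix P with tr(P) < 1 is dominated by a full-power covariance matrix Q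
that keeps all power gains at receivers k ≠ ℓ and strictly increases the gain at receiver ℓ,
where Q adds the residual power in the direction of the projection of h_ℓ onto the
orthogonal complement of the other channels. -/
theorem stmt_11 (N K : ℕ) (hKN : K ≤ N) (h : Fin K → (Fin N → ℂ))
    (hli : LinearIndependent ℂ h) (ℓ : Fin K)
    (P : Matrix (Fin N) (Fin N) ℂ) (hP : P.PosSemidef) (htr : P.trace.re < 1)
    (Pr : Matrix (Fin N) (Fin N) ℂ) (hPrH : Pr.IsHermitian) (hPrIdem : Pr * Pr = Pr)
    (hPrRange : ∀ x : Fin N → ℂ, (∀ j, j ≠ ℓ → star (h j) ⬝ᵥ x = 0) ↔ Pr *ᵥ x = x)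
    (Q : Matrix (Fin N) (Fin N) ℂ)
    (hQdef : Q = P + ((1 - P.trace.re) * (∑ i, ‖(Pr *ᵥ h ℓ) i‖ ^ 2)⁻¹) •
        vecMulVec (Pr *ᵥ h ℓ) (star (Pr *ᵥ h ℓ))) :
    Pr *ᵥ h ℓ ≠ 0 ∧
    Q.PosSemidef ∧
    Q.trace = 1 ∧
    (∀ k, k ≠ ℓ → (star (h k) ⬝ᵥ Q *ᵥ h k).re = (star (h k) ⬝ᵥ P *ᵥ h k).re) ∧
    (star (h ℓ) ⬝ᵥ P *ᵥ h ℓ).re < (star (h ℓ) ⬝ᵥ Q *ᵥ h ℓ).re :=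
  stmt_11_general N K h hli ℓ P hP htr Pr hPrH hPrIdem hPrRange Q hQdef
end
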